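/- Let f : [a,b] → ℝ (a < b) be such that f′ is absolutely continuous on [a,b], f″ ∈ L¹[a,b], |f″|^q is s-convex in the second sense on [a,b] for some fixed s ∈ (0,1] with q > 1 and 1/p + 1/q = 1, and f′(a) = f′(b). Then |(1/(b−a))∫_a^b f(t) dt − (f(a)+f(b))/2| ≤ ((b−a)²/(8(2p+1)^{1/p}(s+1)^{1/q}))[|f″(a)|^q + |f″(b)|^q]^{1/q}. -/

import Mathlib

open MeasureTheory

def SConvexOn (s : ℝ) (D : Set ℝ) (g : ℝ → ℝ) : Prop :=
  ∀ x ∈ D, ∀ y ∈ D, ∀ α β : ℝ, 0 ≤ α → 0 ≤ β → α + β = 1 →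
    g (α * x + β * y) ≤ α ^ s * g x + β ^ s * g y

/-
Integrating by parts twice and using `f' a = f' b`, the trapezoid error equals
`(2 (b - a))⁻¹ ∫ (t - (a + b) / 2)² f''(t) dt`. Hölder's inequality bounds this by the `L^p` norm of
the kernel, computed explicitly, times the `L^q` norm of `f''`. Integrating the s-convexity
inequality along `t = (b - t)/(b - a) • a + (t - a)/(b - a) • b` gives the
Hermite–Hadamard-type bound `∫ |f''|^q ≤ (b - a) (|f'' a|^q + |f'' b|^q) / (s + 1)`.
-/

open Set intervalIntegral

theorem integral_sub_midpoint_sq_mul_eq {a b : ℝ} {f f' f'' : ℝ → ℝ}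
    (hf' : ∀ t ∈ uIcc a b, HasDerivAt f (f' t) t)
    (hf'' : ∀ t ∈ uIcc a b, HasDerivAt f' (f'' t) t)
    (hint : IntervalIntegrable f'' volume a b) :
    ∫ t in a..b, (t - (a + b) / 2) ^ 2 * f'' t
      = ((b - a) / 2) ^ 2 * (f' b - f' a) + 2 * (∫ t in a..b, f t) - (b - a) * (f a + f b) := by
  set c := (a + b) / 2
  have hf'_int : IntervalIntegrable f' volume a b :=
    ContinuousOn.intervalIntegrable fun t ht => (hf'' t ht).continuousAt.continuousWithinAt
  have h_sq : ∀ t ∈ uIcc a b, HasDerivAt (fun t => (t - c) ^ 2) (2 * (t - c)) t := fun t _ => by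
    simpa using ((hasDerivAt_id t).sub_const c).fun_pow 2
  have ibp₂ := integral_mul_deriv_eq_deriv_mul h_sq hf''
    ((continuous_const.mul (continuous_id.sub continuous_const)).intervalIntegrable a b) hint
  have ibp₁ := integral_mul_deriv_eq_deriv_mul (fun t _ => (hasDerivAt_id' t).sub_const c) hf'
    intervalIntegrable_const hf'_int
  have h_two : ∫ t in a..b, 2 * (t - c) * f' t = 2 * ∫ t in a..b, (t - c) * f' t := by
    simp only [mul_assoc, intervalIntegral.integral_const_mul]
  rw [ibp₂, h_two, ibp₁]
  simp only [one_mul, c]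
  ring

theorem SConvexOn.le_of_mem_Icc {s a b t : ℝ} {g : ℝ → ℝ} (hg : SConvexOn s (Icc a b) g)
    (hab : a < b) (ht : t ∈ Icc a b) :
    g t ≤ ((b - t) / (b - a)) ^ s * g a + ((t - a) / (b - a)) ^ s * g b := by
  have hba : 0 < b - a := sub_pos.2 hab
  have h_comb : (b - t) / (b - a) * a + (t - a) / (b - a) * b = t := by
    field_simp; ring
  simpa only [h_comb] using hg a (left_mem_Icc.2 hab.le) b (right_mem_Icc.2 hab.le)
    ((b - t) / (b - a)) ((t - a) / (b - a))
    (div_nonneg (by linarith [ht.2]) hba.le) (div_nonneg (by linarith [ht.1]) hba.le)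
    (by field_simp; ring)

theorem SConvexOn.le_add_of_mem_Icc {s a b t : ℝ} {g : ℝ → ℝ} (hg : SConvexOn s (Icc a b) g)
    (hab : a < b) (hs : 0 ≤ s) (ha : 0 ≤ g a) (hb : 0 ≤ g b) (ht : t ∈ Icc a b) :
    g t ≤ g a + g b := by
  have hba : 0 < b - a := sub_pos.2 hab
  have h₁ : ((b - t) / (b - a)) ^ s ≤ 1 := Real.rpow_le_one
    (div_nonneg (by linarith [ht.2]) hba.le) ((div_le_one hba).2 (by linarith [ht.1])) hs
  have h₂ : ((t - a) / (b - a)) ^ s ≤ 1 := Real.rpow_le_one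
    (div_nonneg (by linarith [ht.1]) hba.le) ((div_le_one hba).2 (by linarith [ht.2])) hs
  calc g t ≤ _ := hg.le_of_mem_Icc hab ht
    _ ≤ 1 * g a + 1 * g b := by gcongr
    _ = g a + g b := by ring

theorem SConvexOn.intervalIntegrable {s a b : ℝ} {g : ℝ → ℝ} (hg : SConvexOn s (Icc a b) g)
    (hab : a < b) (hs : 0 ≤ s) (hg_nonneg : ∀ t ∈ Icc a b, 0 ≤ g t)
    (hg_meas : AEStronglyMeasurable g (volume.restrict (Ioc a b))) :
    IntervalIntegrable g volume a b := by
  refine (intervalIntegrable_iff_integrableOn_Ioc_of_le hab.le).2 <|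
    IntegrableOn.of_bound measure_Ioc_lt_top hg_meas (g a + g b) ?_
  refine ae_restrict_of_forall_mem measurableSet_Ioc fun t ht => ?_
  have ht' := Ioc_subset_Icc_self ht
  rw [Real.norm_of_nonneg (hg_nonneg t ht')]
  exact hg.le_add_of_mem_Icc hab hs (hg_nonneg a (left_mem_Icc.2 hab.le))
    (hg_nonneg b (right_mem_Icc.2 hab.le)) ht'

theorem integral_div_sub_rpow {a b s : ℝ} (hab : a ≠ b) (hs : -1 < s) :
    ∫ t in a..b, ((t - a) / (b - a)) ^ s = (b - a) / (s + 1) := by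
  have hba : b - a ≠ 0 := sub_ne_zero.2 hab.symm
  rw [integral_comp_sub_right (fun u => (u / (b - a)) ^ s), sub_self,
    integral_comp_div (fun u => u ^ s) hba, zero_div, div_self hba, smul_eq_mul,
    integral_rpow (Or.inl hs), Real.one_rpow, Real.zero_rpow (by linarith)]
  ring

theorem integral_sub_div_rpow {a b s : ℝ} (hab : a ≠ b) (hs : -1 < s) :
    ∫ t in a..b, ((b - t) / (b - a)) ^ s = (b - a) / (s + 1) := by
  have hba : b - a ≠ 0 := sub_ne_zero.2 hab.symm
  rw [integral_comp_sub_left (fun u => (u / (b - a)) ^ s), sub_self,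
    integral_comp_div (fun u => u ^ s) hba, zero_div, div_self hba, smul_eq_mul,
    integral_rpow (Or.inl hs), Real.one_rpow, Real.zero_rpow (by linarith)]
  ring

theorem SConvexOn.intervalIntegral_le {s a b : ℝ} {g : ℝ → ℝ} (hg : SConvexOn s (Icc a b) g)
    (hab : a < b) (hs : 0 ≤ s) (hint : IntervalIntegrable g volume a b) :
    ∫ t in a..b, g t ≤ (b - a) * (g a + g b) / (s + 1) := by
  have h_bound_int : IntervalIntegrable
      (fun t => ((b - t) / (b - a)) ^ s * g a + ((t - a) / (b - a)) ^ s * g b) volume a b :=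
    Continuous.intervalIntegrable (by fun_prop) a b
  calc ∫ t in a..b, g t
      ≤ ∫ t in a..b, (((b - t) / (b - a)) ^ s * g a + ((t - a) / (b - a)) ^ s * g b) :=
        integral_mono_on hab.le hint h_bound_int fun t ht => hg.le_of_mem_Icc hab ht
    _ = (b - a) * (g a + g b) / (s + 1) := by
        rw [intervalIntegral.integral_add, intervalIntegral.integral_mul_const,
          intervalIntegral.integral_mul_const,
          integral_sub_div_rpow hab.ne (by linarith), integral_div_sub_rpow hab.ne (by linarith)]
        · ring
        all_goals exact Continuous.intervalIntegrable (by fun_prop) a b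

theorem integral_abs_sub_midpoint_rpow {a b r : ℝ} (hab : a ≤ b) (hr : 0 ≤ r) :
    ∫ t in a..b, |t - (a + b) / 2| ^ r = (b - a) ^ (r + 1) / (2 ^ r * (r + 1)) := by
  set h := (b - a) / 2 with h_def
  have h_nonneg : 0 ≤ h := by rw [h_def]; linarith
  have h_cont : Continuous fun u : ℝ => |u| ^ r :=
    (Real.continuous_rpow_const hr).comp continuous_abs
  have h_shift : ∫ t in a..b, |t - (a + b) / 2| ^ r = ∫ u in -h..h, |u| ^ r := by
    rw [integral_comp_sub_right (fun u => |u| ^ r)]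
    congr 1 <;> ring
  have h_half : ∫ u in (0 : ℝ)..h, |u| ^ r = h ^ (r + 1) / (r + 1) := by
    rw [integral_congr fun u hu => by rw [abs_of_nonneg (uIcc_of_le h_nonneg ▸ hu).1],
      integral_rpow (Or.inl (by linarith)), Real.zero_rpow (by linarith), sub_zero]
  have h_sym : ∫ u in -h..0, |u| ^ r = ∫ u in (0 : ℝ)..h, |u| ^ r := by
    simpa only [abs_neg, neg_zero] using
      (integral_comp_neg (fun u : ℝ => |u| ^ r) (a := 0) (b := h)).symm
  rw [h_shift, ← integral_add_adjacent_intervals (b := 0) (h_cont.intervalIntegrable _ _)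
    (h_cont.intervalIntegrable _ _), h_sym, h_half, h_def,
    Real.div_rpow (by linarith) zero_le_two, Real.rpow_add_one two_ne_zero]
  field_simp
  ring

theorem integral_abs_sub_midpoint_sq_rpow {a b p : ℝ} (hab : a ≤ b) (hp : 0 ≤ p) :
    ∫ t in a..b, |(t - (a + b) / 2) ^ 2| ^ p
      = (b - a) ^ (2 * p + 1) / (2 ^ (2 * p) * (2 * p + 1)) := by
  rw [← integral_abs_sub_midpoint_rpow hab (by linarith)]
  refine integral_congr fun t _ => ?_
  rw [abs_pow, ← Real.rpow_natCast, ← Real.rpow_mul (abs_nonneg _)]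
  norm_num

theorem memLp_restrict_Ioc_of_intervalIntegrable_abs_rpow {a b r : ℝ} {f : ℝ → ℝ} (hr : 0 < r)
    (hf : AEStronglyMeasurable f (volume.restrict (Ioc a b)))
    (hint : IntervalIntegrable (fun t => |f t| ^ r) volume a b) :
    MemLp f (ENNReal.ofReal r) (volume.restrict (Ioc a b)) :=
  (integrable_norm_rpow_iff hf (by simpa using hr) ENNReal.ofReal_ne_top).1
    (by simp only [Real.norm_eq_abs, ENNReal.toReal_ofReal hr.le]; exact hint.1)

theorem abs_intervalIntegral_mul_le_Lp_mul_Lq {a b p q : ℝ} {f g : ℝ → ℝ} (hab : a ≤ b)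
    (hpq : p.HolderConjugate q) (hf : MemLp f (ENNReal.ofReal p) (volume.restrict (Ioc a b)))
    (hg : MemLp g (ENNReal.ofReal q) (volume.restrict (Ioc a b))) :
    |∫ t in a..b, f t * g t|
      ≤ (∫ t in a..b, |f t| ^ p) ^ (1 / p) * (∫ t in a..b, |g t| ^ q) ^ (1 / q) := by
  simp only [integral_of_le hab, ← Real.norm_eq_abs]
  calc ‖∫ t in Ioc a b, f t * g t‖ ≤ ∫ t in Ioc a b, ‖f t * g t‖ := norm_integral_le_integral_norm _
    _ = ∫ t in Ioc a b, ‖f t‖ * ‖g t‖ := by simp only [norm_mul]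
    _ ≤ _ := integral_mul_norm_le_Lp_mul_Lq hpq hf hg

theorem holder_constant_eq {p q L M σ : ℝ} (hpq : p.HolderConjugate q) (hL : 0 < L) (hM : 0 ≤ M)
    (hσ : 0 < σ) :
    (L ^ (2 * p + 1) / (2 ^ (2 * p) * (2 * p + 1))) ^ (1 / p) * (L * M / σ) ^ (1 / q)
      = 2 * L * (L ^ 2 / (8 * (2 * p + 1) ^ (1 / p) * σ ^ (1 / q)) * M ^ (1 / q)) := by
  have hp := hpq.pos
  have h_two : 2 * p * (1 / p) = 2 := by field_simp
  have h_L : L ^ ((2 * p + 1) * (1 / p)) * L ^ (1 / q) = L ^ 2 * L := by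
    have h_exp : (2 * p + 1) * (1 / p) + 1 / q = 2 + 1 := by
      linear_combination hpq.one_div_add_one_div + h_two
    rw [← Real.rpow_add hL, h_exp, Real.rpow_add hL, Real.rpow_one]
    norm_cast
  have hP : (0 : ℝ) < (2 * p + 1) ^ (1 / p) := by positivity
  have hS : (0 : ℝ) < σ ^ (1 / q) := by positivity
  rw [Real.div_rpow (by positivity) (by positivity), Real.mul_rpow (by positivity) (by positivity),
    Real.div_rpow (by positivity) hσ.le, Real.mul_rpow hL.le hM, ← Real.rpow_mul hL.le,
    ← Real.rpow_mul zero_le_two, h_two, Real.rpow_two]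
  calc _ = L ^ ((2 * p + 1) * (1 / p)) * L ^ (1 / q) * M ^ (1 / q)
        / (2 ^ 2 * (2 * p + 1) ^ (1 / p) * σ ^ (1 / q)) := by ring
    _ = _ := by rw [h_L]; field_simp; ring

theorem stmt11_general (a b : ℝ) (hab : a < b) (f f' f'' : ℝ → ℝ)
    (hf' : ∀ t ∈ Set.Icc a b, HasDerivAt f (f' t) t)
    (hf'' : ∀ t ∈ Set.Icc a b, HasDerivAt f' (f'' t) t)
    (hint : IntervalIntegrable f'' volume a b)
    (s : ℝ) (hs0 : 0 < s)
    (p q : ℝ) (hp : 1 < p) (hpq : 1 / p + 1 / q = 1)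
    (hconv : SConvexOn s (Set.Icc a b) (fun t => |f'' t| ^ q))
    (hend : f' a = f' b) :
    |((1 / (b - a)) * ∫ t in a..b, f t) - (f a + f b) / 2|
      ≤ (b - a) ^ 2 / (8 * (2 * p + 1) ^ (1 / p) * (s + 1) ^ (1 / q)) *
          (|f'' a| ^ q + |f'' b| ^ q) ^ (1 / q) := by
  have hpq' : p.HolderConjugate q :=
    Real.holderConjugate_iff.2 ⟨hp, by simpa only [one_div] using hpq⟩
  have hq := hpq'.symm.pos
  have hba : 0 < b - a := sub_pos.2 hab
  have h_pow_int : IntervalIntegrable (fun t => |f'' t| ^ q) volume a b :=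
    hconv.intervalIntegrable hab hs0.le (fun t _ => by positivity)
      ((Real.continuous_rpow_const hq.le).comp_aestronglyMeasurable hint.1.1.norm)
  have h_kernel_cont : Continuous fun t => |(t - (a + b) / 2) ^ 2| ^ p :=
    (Real.continuous_rpow_const hpq'.nonneg).comp (by fun_prop)
  have h_holder := abs_intervalIntegral_mul_le_Lp_mul_Lq hab.le hpq'
    (memLp_restrict_Ioc_of_intervalIntegrable_abs_rpow hpq'.pos (by fun_prop)
      (h_kernel_cont.intervalIntegrable a b))
    (memLp_restrict_Ioc_of_intervalIntegrable_abs_rpow hq hint.1.1 h_pow_int)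
  rw [integral_abs_sub_midpoint_sq_rpow hab.le hpq'.nonneg] at h_holder
  have h_identity := integral_sub_midpoint_sq_mul_eq (uIcc_of_le hab.le ▸ hf')
    (uIcc_of_le hab.le ▸ hf'') hint
  rw [hend, sub_self, mul_zero, zero_add] at h_identity
  have h_lhs : ((1 / (b - a)) * ∫ t in a..b, f t) - (f a + f b) / 2
      = (∫ t in a..b, (t - (a + b) / 2) ^ 2 * f'' t) / (2 * (b - a)) := by
    rw [h_identity]; field_simp
  rw [h_lhs, abs_div, abs_of_pos (by positivity : (0 : ℝ) < 2 * (b - a)),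
    div_le_iff₀ (by positivity), mul_comm,
    ← holder_constant_eq hpq' hba (by positivity) (by linarith)]
  refine h_holder.trans ?_
  gcongr
  · exact integral_nonneg hab.le fun t _ => by positivity
  · exact hconv.intervalIntegral_le hab hs0.le h_pow_int

theorem stmt11 (a b : ℝ) (ha : 0 ≤ a) (hab : a < b) (f f' f'' : ℝ → ℝ)
    (hf' : ∀ t ∈ Set.Icc a b, HasDerivAt f (f' t) t)
    (hf'' : ∀ t ∈ Set.Icc a b, HasDerivAt f' (f'' t) t)
    (hint : IntervalIntegrable f'' volume a b)
    (s : ℝ) (hs0 : 0 < s) (hs1 : s ≤ 1)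
    (p q : ℝ) (hp : 1 < p) (hq : 1 < q) (hpq : 1 / p + 1 / q = 1)
    (hconv : SConvexOn s (Set.Icc a b) (fun t => |f'' t| ^ q))
    (hend : f' a = f' b) :
    |((1 / (b - a)) * ∫ t in a..b, f t) - (f a + f b) / 2|
      ≤ (b - a) ^ 2 / (8 * (2 * p + 1) ^ (1 / p) * (s + 1) ^ (1 / q)) *
          (|f'' a| ^ q + |f'' b| ^ q) ^ (1 / q) :=
  stmt11_general a b hab f f' f'' hf' hf'' hint s hs0 p q hp hpq hconv hend
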